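/- arXiv:2110.00614 — 2 statements merged into one kernel-verified Lean document; each statement's English description precedes it below -/
import Mathlib

section
/- Let p be a prime, k a perfect field of characteristic p, and n ≥ 1. On V = kⁿ consider the pairing ⟨v,w⟩ := Σ_{i=1}^n v_i · (w_{n+1−i})^p. Then for every k-subspace U ⊆ V one has (U^#)^# = τ(U), where U^# := {x ∈ V : ⟨x,u⟩ = 0 for all u ∈ U} and τ : V → V raises every coordinate to the power p². -/
/-! With `B v w = ∑ i, v i * w (rev i)` and `φ v = v ^ p` coordinatewise, the pairing is
`⟨x, u⟩ = B x (φ u)`, so `S^#` is the `B`-orthogonal of `φ(S)`. Since `B (φ x) (φ u) = (B x u)^p`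
and `φ` is bijective on a perfect field, `φ` commutes with taking `B`-orthogonals; hence
`(U^#)^# = φ(φ(U^⊥⊥)) = φ²(U)`, the last step because `B` is symmetric and nondegenerate. -/

/-- The pairing `⟨v,w⟩ = Σ_{i=1}^n v_i · (w_{n+1−i})^p` on `kⁿ`. -/
def pairingP (p : ℕ) {k : Type*} [Field k] {n : ℕ} (v w : Fin n → k) : k :=
  ∑ i : Fin n, v i * (w i.rev) ^ p

/-- For a set `S ⊆ kⁿ`, its orthogonal `S^# = {x ∈ kⁿ : ⟨x,u⟩ = 0 for all u ∈ S}`. -/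
def sharpSet (p : ℕ) {k : Type*} [Field k] {n : ℕ} (S : Set (Fin n → k)) :
    Set (Fin n → k) :=
  {x | ∀ u ∈ S, pairingP p x u = 0}

theorem Pi.bijective_pow_of_perfectRing (ι : Type*) (R : Type*) [CommSemiring R] (p : ℕ)
    [ExpChar R p] [PerfectRing R p] : Function.Bijective fun v : ι → R => v ^ p :=
  Function.Bijective.piMap fun _ => PerfectRing.bijective_frobenius

section RevForm

variable {k : Type*} [Field k] {n : ℕ}

variable (k n) in
def revForm : LinearMap.BilinForm k (Fin n → k) :=
  LinearMap.mk₂ k (fun v w => ∑ i : Fin n, v i * w i.rev)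
    (fun v v' w => by simp [add_mul, Finset.sum_add_distrib])
    (fun a v w => by simp [Finset.mul_sum, mul_assoc])
    (fun v w w' => by simp [mul_add, Finset.sum_add_distrib])
    (fun a v w => by simp [Finset.mul_sum, mul_left_comm])

theorem revForm_apply (v w : Fin n → k) : revForm k n v w = ∑ i : Fin n, v i * w i.rev :=
  rfl

theorem revForm_comm (v w : Fin n → k) : revForm k n v w = revForm k n w v :=
  Fintype.sum_equiv Fin.revPerm _ _ fun i => by simp [mul_comm]

theorem revForm_isRefl : (revForm k n).IsRefl := fun v w h => by
  rwa [revForm_comm]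

theorem revForm_nondegenerate : (revForm k n).Nondegenerate := by
  have separatingLeft : (revForm k n).SeparatingLeft := fun v hv => funext fun j => by
    simpa [revForm_apply, Pi.single_apply, Fin.rev_inj] using hv (Pi.single j.rev 1)
  exact ⟨separatingLeft, fun w hw => separatingLeft w fun v => by rw [revForm_comm]; exact hw v⟩

theorem revForm_pow_pow (p : ℕ) [ExpChar k p] (v w : Fin n → k) :
    revForm k n (v ^ p) (w ^ p) = revForm k n v w ^ p := by
  simp only [revForm_apply, ← frobenius_def, map_sum, map_mul, Pi.pow_apply]

theorem pairingP_eq_revForm_pow (p : ℕ) (v w : Fin n → k) :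
    pairingP p v w = revForm k n v (w ^ p) :=
  rfl

def revOrth (S : Set (Fin n → k)) : Set (Fin n → k) :=
  {v | ∀ u ∈ S, revForm k n v u = 0}

theorem revOrth_revOrth (U : Submodule k (Fin n → k)) : revOrth (revOrth (U : Set (Fin n → k))) = U := by
  have coe_orthogonal (W : Submodule k (Fin n → k)) :
      revOrth (W : Set (Fin n → k)) = ((revForm k n).orthogonal W : Set (Fin n → k)) :=
    Set.ext fun v => forall₂_congr fun u _ => by rw [revForm_comm]
  rw [coe_orthogonal, coe_orthogonal,
    LinearMap.BilinForm.orthogonal_orthogonal revForm_nondegenerate revForm_isRefl]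

theorem sharpSet_eq_revOrth_image_pow (p : ℕ) (S : Set (Fin n → k)) :
    sharpSet p S = revOrth ((· ^ p) '' S) := by
  ext v
  simp [sharpSet, revOrth, pairingP_eq_revForm_pow]

theorem revOrth_image_pow (p : ℕ) [ExpChar k p] [PerfectRing k p] (S : Set (Fin n → k)) :
    revOrth ((· ^ p) '' S) = (· ^ p) '' revOrth S := by
  have hφ := Pi.bijective_pow_of_perfectRing (Fin n) k p
  ext y
  obtain ⟨v, rfl⟩ := hφ.2 y
  rw [hφ.1.mem_set_image]
  simp only [revOrth, Set.mem_ofPred_eq, Set.forall_mem_image, revForm_pow_pow,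
    pow_eq_zero_iff (expChar_ne_zero k p)]

end RevForm

theorem statement14_general (p : ℕ) (k : Type*) [Field k]
    [ExpChar k p] [PerfectRing k p] (n : ℕ)
    (U : Submodule k (Fin n → k)) :
    sharpSet p (sharpSet p (U : Set (Fin n → k))) =
      (fun v : Fin n → k => fun i => (v i) ^ (p ^ 2)) '' (U : Set (Fin n → k)) := by
  rw [sharpSet_eq_revOrth_image_pow, sharpSet_eq_revOrth_image_pow, revOrth_image_pow,
    revOrth_image_pow, revOrth_image_pow, revOrth_revOrth, Set.image_image]
  refine Set.image_congr fun v _ => funext fun i => ?_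
  simp only [Pi.pow_apply, ← pow_mul, sq]

/-- for `k` a perfect field of characteristic `p` and `U` a `k`-subspace of
`V = kⁿ`, one has `(U^#)^# = τ(U)`, where `τ` raises every coordinate to the power `p²`. -/
theorem statement14 (p : ℕ) (hp : p.Prime) (k : Type*) [Field k] [CharP k p]
    [ExpChar k p] [PerfectRing k p] (n : ℕ) (hn : 1 ≤ n)
    (U : Submodule k (Fin n → k)) :
    sharpSet p (sharpSet p (U : Set (Fin n → k))) =
      (fun v : Fin n → k => fun i => (v i) ^ (p ^ 2)) '' (U : Set (Fin n → k)) :=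
  statement14_general p k n U
end

section
/- Let p be a prime, k a perfect field of characteristic p, n ≥ 1, V = kⁿ, and let τ : V → V be the bijection raising every coordinate to the power p². Suppose F₁ ⊆ F₂ ⊆ … ⊆ F_r are k-subspaces of V such that τ(F_i) = F_{i−1} + τ(F_{i−1}) for all 2 ≤ i ≤ r. Then F_i = Σ_{l=0}^{i−1} τ^{−l}(F₁) for all 1 ≤ i ≤ r, where τ^{−l}(F₁) denotes the preimage of F₁ under the l-fold iterate of τ. In particular, the flag (F₁, …, F_r) is completely determined by the subspace F₁. -/
open Pointwise Finset

/-! Since `k` is perfect, `τ` is a bijective `σ`-semilinear map for the automorphism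
`σ : x ↦ x ^ p ^ 2`, so `φ : X ↦ τ⁻¹(X)` is an order automorphism of the lattice of subspaces.
Applying `φ` to `τ(F_{i+1}) = F_i + τ(F_i)` gives `F_{i+1} = φ(F_i) ⊔ F_i`, and in any lattice this
recursion is solved by `F_i = ⨆_{l < i} φ^l(F_1)`: `φ` shifts the join by one index and the
missing term `F_1` is already below `F_i`. -/

section Lattice

variable {L G : Type*} [Lattice L] [OrderBot L] [FunLike G L L] [SupBotHomClass G L L] (φ : G)

theorem finsetSup_range_succ_iterate {m : ℕ} (hm : 1 ≤ m) (a : L) :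
    (range (m + 1)).sup (fun l => φ^[l] a) =
      φ ((range m).sup fun l => φ^[l] a) ⊔ (range m).sup fun l => φ^[l] a := by
  have hshift : φ ((range m).sup fun l => φ^[l] a) = (range m).sup fun l => φ^[l + 1] a := by
    rw [map_finset_sup]
    simp only [Function.comp_def, Function.iterate_succ_apply']
  have hsplit : (range (m + 1)).sup (fun l => φ^[l] a) =
      ((range m).sup fun l => φ^[l + 1] a) ⊔ a := by
    rw [range_add_one', sup_insert, sup_map, sup_comm]
    rfl
  have ha : a ≤ (range m).sup fun l => φ^[l] a :=
    le_sup (f := fun l => φ^[l] a) (mem_range.mpr hm)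
  have hle : ((range m).sup fun l => φ^[l] a) ≤ (range (m + 1)).sup (fun l => φ^[l] a) :=
    sup_mono (range_subset_range.mpr m.le_succ)
  rw [hshift]
  rw [hsplit] at hle ⊢
  exact le_antisymm (sup_le_sup_left ha _) (sup_le le_sup_left hle)

theorem eq_finsetSup_range_iterate_of_succ_eq {F : ℕ → L} {r : ℕ}
    (h : ∀ i, 1 ≤ i → i < r → F (i + 1) = φ (F i) ⊔ F i) :
    ∀ i, 1 ≤ i → i ≤ r → F i = (range i).sup fun l => φ^[l] (F 1) := by
  intro i hi
  induction i, hi using Nat.le_induction with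
  | base => intro; simp
  | succ m hm ih =>
    intro hmr
    rw [h m hm hmr, ih (by omega), finsetSup_range_succ_iterate φ hm]

end Lattice

section Submodule

variable {R S M : Type*} [Semiring R] [Semiring S] [AddCommMonoid M] [Module R M]

theorem Submodule.coe_finset_sup {ι : Type*} (s : Finset ι) (f : ι → Submodule R M) :
    ((s.sup f : Submodule R M) : Set M) = ∑ i ∈ s, (f i : Set M) := by
  classical
  induction s using Finset.induction with
  | empty => simp [Set.singleton_zero]
  | insert a s ha ih => rw [sup_insert, sum_insert ha, coe_sup, ih]

theorem Submodule.coe_iterate_comap {σ : R →+* R} (f : M →ₛₗ[σ] M) (l : ℕ)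
    (P : Submodule R M) : ((comap f)^[l] P : Set M) = f^[l] ⁻¹' P := by
  rw [Set.preimage_iterate_eq]
  exact Function.Semiconj.iterate_right (f := ((↑) : Submodule R M → Set M)) (fun _ => rfl) l P

def RingHom.compLeftSemilinearMap (σ : R →+* S) (ι : Type*) : (ι → R) →ₛₗ[σ] (ι → S) where
  toFun v := σ ∘ v
  map_add' v w := by ext; simp
  map_smul' a v := by ext; simp

end Submodule

theorem statement15_general (p : ℕ) (k : Type*) [Field k]
    [ExpChar k p] [PerfectRing k p] (n r : ℕ)
    (F : ℕ → Submodule k (Fin n → k))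
    (τ : (Fin n → k) → (Fin n → k))
    (hτ : τ = fun v : Fin n → k => fun i => (v i) ^ (p ^ 2))
    (hrec : ∀ i, 2 ≤ i → i ≤ r →
      τ '' (F i : Set (Fin n → k)) =
        (F (i - 1) : Set (Fin n → k)) + τ '' (F (i - 1) : Set (Fin n → k))) :
    ∀ i, 1 ≤ i → i ≤ r →
      (F i : Set (Fin n → k)) =
        ∑ l ∈ Finset.range i, (τ^[l]) ⁻¹' (F 1 : Set (Fin n → k)) := by
  let f := (iterateFrobeniusEquiv k p 2 : k →+* k).compLeftSemilinearMap (Fin n)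
  have hf : ⇑f = τ := by subst hτ; rfl
  let φ := (Submodule.orderIsoMapComapOfBijective f
    (iterateFrobeniusEquiv k p 2).bijective.comp_left).symm
  have hsucc : ∀ i, 1 ≤ i → i < r → F (i + 1) = φ (F i) ⊔ F i := by
    intro i hi hir
    have hmap : (F (i + 1)).map f = F i ⊔ (F i).map f := SetLike.coe_injective <| by
      simpa [Submodule.map_coe, Submodule.coe_sup, hf] using hrec (i + 1) (by omega) hir
    calc F (i + 1) = φ ((F (i + 1)).map f) := (φ.apply_symm_apply _).symm
      _ = φ (F i) ⊔ F i := by rw [hmap, map_sup]; congr 1; exact φ.apply_symm_apply _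
  intro i hi hir
  rw [eq_finsetSup_range_iterate_of_succ_eq φ hsucc i hi hir, Submodule.coe_finset_sup]
  exact sum_congr rfl fun l _ => by rw [← hf]; exact Submodule.coe_iterate_comap f l (F 1)

/-- Statement 15: let `k` be a perfect field of characteristic `p`, `V = kⁿ`, and
`τ : V → V` the bijection raising every coordinate to the power `p²`.  If
`F₁ ⊆ F₂ ⊆ … ⊆ F_r` are `k`-subspaces of `V` with `τ(F_i) = F_{i−1} + τ(F_{i−1})` for
all `2 ≤ i ≤ r`, then `F_i = Σ_{l=0}^{i−1} τ^{−l}(F₁)` for all `1 ≤ i ≤ r`; in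
particular, the flag is completely determined by `F₁`. -/
theorem statement15 (p : ℕ) (hp : p.Prime) (k : Type*) [Field k] [CharP k p]
    [ExpChar k p] [PerfectRing k p] (n r : ℕ) (hn : 1 ≤ n)
    (F : ℕ → Submodule k (Fin n → k))
    (τ : (Fin n → k) → (Fin n → k))
    (hτ : τ = fun v : Fin n → k => fun i => (v i) ^ (p ^ 2))
    (hmono : ∀ i, 1 ≤ i → i < r → F i ≤ F (i + 1))
    (hrec : ∀ i, 2 ≤ i → i ≤ r →
      τ '' (F i : Set (Fin n → k)) =
        (F (i - 1) : Set (Fin n → k)) + τ '' (F (i - 1) : Set (Fin n → k))) :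
    ∀ i, 1 ≤ i → i ≤ r →
      (F i : Set (Fin n → k)) =
        ∑ l ∈ Finset.range i, (τ^[l]) ⁻¹' (F 1 : Set (Fin n → k)) :=
  statement15_general p k n r F τ hτ hrec
end
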